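/- For the generalized double Pareto mixing density π(λ²) = (β^α / (2Γ(α))) ∫_0^∞ e^{-(γ²λ²/2 + βγ)} γ^{α+1} dγ (with α, β > 0), one can write π(λ²) = K (λ²)^{-α/2 - 1} L(λ²) where K = β^α/Γ(α) and L(t) = 2^{α/2 - 1} ∫_0^∞ e^{-β√(2u/t)} e^{-u} u^{α/2} du, and L satisfies lim_{t→∞} L(t) = 2^{α/2 - 1} Γ(α/2 + 1) > 0; in particular, L is slowly varying on (0,∞) and sup_{t>0} L(t) = 2^{α/2 - 1} Γ(α/2 + 1). -/

import Mathlib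

/-!
Substituting `u = tγ²/2` turns the `γ`-integral of the mixing density into the `u`-integral
defining `L`, the powers of `t` and `2` collecting into `K t^{-α/2-1}`. In `L` the weight
`e^{-β√(2u/t)}` lies in `(0, 1]` and tends to `1` as `t → ∞`, so by dominated convergence against
the Gamma integrand `e^{-u} u^{α/2}` the function `L` is bounded by its limit
`2^{α/2-1} Γ(α/2+1)` and tends to it. A positive limit gives slow variation, and a limit that is
also an upper bound is the supremum.
-/

open MeasureTheory Filter Set Topology

/-- The slowly varying part of the generalized double Pareto mixing density. -/
noncomputable def gdpL (α β t : ℝ) : ℝ :=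
  (2:ℝ) ^ (α / 2 - 1) *
    ∫ u in Set.Ioi (0:ℝ),
      Real.exp (-(β * Real.sqrt (2 * u / t))) * Real.exp (-u) * u ^ (α / 2)

/-- The generalized double Pareto mixing density for `λ²`. -/
noncomputable def gdpMixing (α β t : ℝ) : ℝ :=
  (β ^ α / (2 * Real.Gamma α)) *
    ∫ γ in Set.Ioi (0:ℝ), Real.exp (-(γ ^ 2 * t / 2 + β * γ)) * γ ^ (α + 1)

theorem integral_comp_mul_sq_Ioi {E : Type*} [NormedAddCommGroup E] [NormedSpace ℝ E]
    (g : ℝ → E) {c : ℝ} (hc : 0 < c) :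
    ∫ x in Ioi (0:ℝ), (2 * c * x) • g (c * x ^ 2) = ∫ u in Ioi (0:ℝ), g u := by
  have hsq := integral_comp_rpow_Ioi_of_pos (g := fun v => c • g (c * v)) two_pos
  rw [integral_smul, integral_comp_mul_left_Ioi' g 0 hc, mul_zero] at hsq
  rw [← hsq]
  refine setIntegral_congr_fun measurableSet_Ioi fun x _ => ?_
  rw [Real.rpow_two, smul_smul, show (2:ℝ) - 1 = 1 by norm_num, Real.rpow_one, mul_right_comm]

theorem gdpL_integral_eq_gdpMixing_integral (α β : ℝ) {t : ℝ} (ht : 0 < t) :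
    ∫ u in Ioi (0:ℝ), Real.exp (-(β * Real.sqrt (2 * u / t))) * Real.exp (-u) * u ^ (α / 2) =
      2 * (t / 2) ^ (α / 2 + 1) *
        ∫ γ in Ioi (0:ℝ), Real.exp (-(γ ^ 2 * t / 2 + β * γ)) * γ ^ (α + 1) := by
  have hc : 0 < t / 2 := by positivity
  rw [← integral_comp_mul_sq_Ioi _ hc, ← integral_const_mul]
  refine setIntegral_congr_fun measurableSet_Ioi fun x (hx : 0 < x) => ?_
  have hsqrt : Real.sqrt (2 * (t / 2 * x ^ 2) / t) = x := by
    rw [show 2 * (t / 2 * x ^ 2) / t = x ^ 2 by field_simp, Real.sqrt_sq hx.le]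
  have hpow : (t / 2 * x ^ 2) ^ (α / 2) = (t / 2) ^ (α / 2) * x ^ α := by
    rw [Real.mul_rpow hc.le (sq_nonneg x), ← Real.rpow_natCast, ← Real.rpow_mul hx.le,
      Nat.cast_ofNat, mul_div_cancel₀ α two_ne_zero]
  rw [smul_eq_mul, hsqrt, hpow, Real.rpow_add_one hx.ne', Real.rpow_add_one hc.ne', neg_add,
    Real.exp_add]
  ring_nf

theorem gdpMixing_eq_mul_gdpL (α β : ℝ) {t : ℝ} (ht : 0 < t) :
    gdpMixing α β t = (β ^ α / Real.Gamma α) * t ^ (-α / 2 - 1) * gdpL α β t := by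
  rw [gdpMixing, gdpL, gdpL_integral_eq_gdpMixing_integral α β ht, Real.div_rpow ht.le zero_le_two,
    show -α / 2 - 1 = -(α / 2 + 1) by ring, Real.rpow_neg ht.le,
    show α / 2 - 1 = (α / 2 + 1) - 2 by ring, Real.rpow_sub two_pos]
  generalize ∫ γ in Ioi (0:ℝ), Real.exp (-(γ ^ 2 * t / 2 + β * γ)) * γ ^ (α + 1) = I
  have : 0 < t ^ (α / 2 + 1) := by positivity
  have : 0 < (2:ℝ) ^ (α / 2 + 1) := by positivity
  field_simp
  ring

theorem integrableOn_exp_neg_mul_rpow_Ioi {s : ℝ} (hs : -1 < s) :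
    IntegrableOn (fun u => Real.exp (-u) * u ^ s) (Ioi 0) := by
  simpa using Real.GammaIntegral_convergent (s := s + 1) (by linarith)

theorem integral_exp_neg_mul_rpow_eq_Gamma {s : ℝ} (hs : -1 < s) :
    ∫ u in Ioi (0:ℝ), Real.exp (-u) * u ^ s = Real.Gamma (s + 1) := by
  simp [Real.Gamma_eq_integral (show 0 < s + 1 by linarith)]

section ExpSqrtWeight

variable {μ : Measure ℝ} {f : ℝ → ℝ} {β : ℝ}

theorem norm_exp_neg_mul_sqrt_mul_le (hβ : 0 ≤ β) (t u : ℝ) :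
    ‖Real.exp (-(β * Real.sqrt (2 * u / t))) * f u‖ ≤ ‖f u‖ := by
  rw [norm_mul, Real.norm_of_nonneg (Real.exp_pos _).le]
  exact mul_le_of_le_one_left (norm_nonneg _)
    (Real.exp_le_one_iff.2 (neg_nonpos.2 (by positivity)))

theorem MeasureTheory.Integrable.exp_neg_mul_sqrt_mul (hf : Integrable f μ) (hβ : 0 ≤ β)
    (t : ℝ) :
    Integrable (fun u => Real.exp (-(β * Real.sqrt (2 * u / t))) * f u) μ :=
  hf.norm.mono' ((by fun_prop : Continuous fun u => Real.exp (-(β * Real.sqrt (2 * u / t))))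
    |>.aestronglyMeasurable.mul hf.aestronglyMeasurable)
    (Eventually.of_forall (norm_exp_neg_mul_sqrt_mul_le hβ t))

theorem tendsto_integral_exp_neg_mul_sqrt_mul (hf : Integrable f μ) (hβ : 0 ≤ β) :
    Tendsto (fun t => ∫ u, Real.exp (-(β * Real.sqrt (2 * u / t))) * f u ∂μ) atTop
      (𝓝 (∫ u, f u ∂μ)) := by
  refine tendsto_integral_filter_of_dominated_convergence (fun u => ‖f u‖)
    (Eventually.of_forall fun t => (hf.exp_neg_mul_sqrt_mul hβ t).aestronglyMeasurable)
    (Eventually.of_forall fun t => Eventually.of_forall (norm_exp_neg_mul_sqrt_mul_le hβ t))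
    hf.norm (Eventually.of_forall fun u => ?_)
  have hsqrt : Tendsto (fun t => Real.sqrt (2 * u / t)) atTop (𝓝 0) := by
    simpa using (tendsto_const_nhds.div_atTop tendsto_id).sqrt
  simpa using ((hsqrt.const_mul β).neg.rexp).mul_const (f u)

theorem integral_exp_neg_mul_sqrt_mul_le (hf : Integrable f μ) (hf₀ : 0 ≤ᵐ[μ] f) (hβ : 0 ≤ β)
    (t : ℝ) : ∫ u, Real.exp (-(β * Real.sqrt (2 * u / t))) * f u ∂μ ≤ ∫ u, f u ∂μ :=
  integral_mono_ae (hf.exp_neg_mul_sqrt_mul hβ t) hf <| hf₀.mono fun u hu =>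
    mul_le_of_le_one_left hu (Real.exp_le_one_iff.2 (neg_nonpos.2 (by positivity)))

end ExpSqrtWeight

theorem tendsto_comp_const_mul_div_self {f : ℝ → ℝ} {L c : ℝ} (hf : Tendsto f atTop (𝓝 L))
    (hL : L ≠ 0) (hc : 0 < c) : Tendsto (fun t => f (c * t) / f t) atTop (𝓝 1) := by
  have := (hf.comp (tendsto_id.const_mul_atTop hc)).div hf hL
  rwa [div_self hL] at this

theorem iSup_pos_eq_of_le_of_tendsto {f : ℝ → ℝ} {L : ℝ} (hle : ∀ t, f t ≤ L)
    (hf : Tendsto f atTop (𝓝 L)) : ⨆ t : {t : ℝ // 0 < t}, f t = L := by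
  have : Nonempty {t : ℝ // 0 < t} := ⟨⟨1, one_pos⟩⟩
  refine le_antisymm (ciSup_le fun t => hle t) (le_of_tendsto hf ?_)
  filter_upwards [eventually_gt_atTop 0] with t ht
  exact le_ciSup (f := fun t : {t : ℝ // 0 < t} => f t) ⟨L, by rintro _ ⟨s, rfl⟩; exact hle s⟩
    ⟨t, ht⟩

theorem gdpL_eq (α β t : ℝ) : gdpL α β t = (2:ℝ) ^ (α / 2 - 1) *
    ∫ u in Ioi (0:ℝ), Real.exp (-(β * Real.sqrt (2 * u / t))) * (Real.exp (-u) * u ^ (α / 2)) := by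
  simp only [gdpL, mul_assoc]

theorem tendsto_gdpL_atTop {α β : ℝ} (hα : -2 < α) (hβ : 0 ≤ β) :
    Tendsto (gdpL α β) atTop (𝓝 ((2:ℝ) ^ (α / 2 - 1) * Real.Gamma (α / 2 + 1))) := by
  have hs : -1 < α / 2 := by linarith
  rw [← integral_exp_neg_mul_rpow_eq_Gamma hs, funext (gdpL_eq α β)]
  exact (tendsto_integral_exp_neg_mul_sqrt_mul (integrableOn_exp_neg_mul_rpow_Ioi hs) hβ).const_mul
    _

theorem gdpL_le {α β : ℝ} (hα : -2 < α) (hβ : 0 ≤ β) (t : ℝ) :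
    gdpL α β t ≤ (2:ℝ) ^ (α / 2 - 1) * Real.Gamma (α / 2 + 1) := by
  have hs : -1 < α / 2 := by linarith
  rw [gdpL_eq, ← integral_exp_neg_mul_rpow_eq_Gamma hs]
  refine mul_le_mul_of_nonneg_left (integral_exp_neg_mul_sqrt_mul_le
    (integrableOn_exp_neg_mul_rpow_Ioi hs) ?_ hβ t) (by positivity)
  filter_upwards [ae_restrict_mem measurableSet_Ioi] with u (hu : 0 < u)
  positivity

/-- The generalized double Pareto mixing density can be written as
`K t^{-α/2-1} L(t)` with `K = β^α/Γ(α)` and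
`L(t) = 2^{α/2-1} ∫_0^∞ e^{-β√(2u/t)} e^{-u} u^{α/2} du`; moreover
`L(t) → 2^{α/2-1} Γ(α/2+1) > 0` as `t → ∞`, `L` is slowly varying,
and `sup_{t>0} L(t) = 2^{α/2-1} Γ(α/2+1)`. -/
theorem gdp_in_general_class (α β : ℝ) (hα : 0 < α) (hβ : 0 < β) :
    (∀ t > 0,
        gdpMixing α β t =
          (β ^ α / Real.Gamma α) * t ^ (-α / 2 - 1) * gdpL α β t) ∧
      Tendsto (fun t => gdpL α β t) atTop
        (𝓝 ((2:ℝ) ^ (α / 2 - 1) * Real.Gamma (α / 2 + 1))) ∧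
      0 < (2:ℝ) ^ (α / 2 - 1) * Real.Gamma (α / 2 + 1) ∧
      (∀ c > 0, Tendsto (fun t => gdpL α β (c * t) / gdpL α β t) atTop (𝓝 1)) ∧
      (⨆ t : {t : ℝ // 0 < t}, gdpL α β t) =
        (2:ℝ) ^ (α / 2 - 1) * Real.Gamma (α / 2 + 1) := by
  have hα' : -2 < α := by linarith
  have hlim := tendsto_gdpL_atTop hα' hβ.le
  have hpos : 0 < (2:ℝ) ^ (α / 2 - 1) * Real.Gamma (α / 2 + 1) :=
    mul_pos (by positivity) (Real.Gamma_pos_of_pos (by positivity))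
  exact ⟨fun t ht => gdpMixing_eq_mul_gdpL α β ht, hlim, hpos,
    fun c hc => tendsto_comp_const_mul_div_self hlim hpos.ne' hc,
    iSup_pos_eq_of_le_of_tendsto (gdpL_le hα' hβ.le) hlim⟩
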